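/- For x, i ∈ {0,1} define ω_x := (1/4)(I₄ + (−1)^x • Y₄) and e_i := (1/2)(I₄ + (−1)^i • Y₄). Then: (a) each ω_x is a two-rebit state (real symmetric positive semidefinite of trace 1); (b) e₀ and e₁ are real symmetric positive semidefinite with e₀ + e₁ = I₄, so {e₀, e₁} is a valid two-outcome measurement; (c) trace(e_i * ω_x) = 1 if i = x and 0 otherwise, so the measurement perfectly distinguishes ω₀ from ω₁; and (d) trace(ω₀ * (E ⊗ₖ F)) = trace(ω₁ * (E ⊗ₖ F)) for all real symmetric 2×2 matrices E, F, so no product effect reveals any information about x. Hence this encoding achieves perfectly secure data hiding in real quantum theory. -/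

import Mathlib

/-! `Y₄` is a symmetric involution of trace zero, so `1 ± Y₄` are twice a pair of complementary
projections of rank two; this gives (a)–(c). For (d), `Y₄ = -(y ⊗ₖ y)` with `y` antisymmetric,
and `trace (y * E) = 0` for every symmetric `E`, so both `ω₀` and `ω₁` act on product effects
as the maximally mixed state `1 / 4`. -/

open Matrix Kronecker

/-- The real 2×2 matrix with rows (0, −1) and (1, 0). -/
noncomputable def y : Matrix (Fin 2) (Fin 2) ℝ := !![0, -1; 1, 0]

/-- The real 4×4 matrix representing σ_y ⊗ σ_y. -/
noncomputable def Y₄ : Matrix (Fin 2 × Fin 2) (Fin 2 × Fin 2) ℝ := -(y ⊗ₖ y)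

/-- A two-rebit state: a real symmetric positive semidefinite 4×4 matrix of trace 1. -/
def IsTwoRebitState (ρ : Matrix (Fin 2 × Fin 2) (Fin 2 × Fin 2) ℝ) : Prop :=
  ρ.IsSymm ∧ ρ.PosSemidef ∧ ρ.trace = 1

/-- The data-hiding states ω_x = (1/4)(I₄ + (−1)^x σ_y ⊗ σ_y). -/
noncomputable def ωdh (x : Fin 2) : Matrix (Fin 2 × Fin 2) (Fin 2 × Fin 2) ℝ :=
  (1 / 4 : ℝ) • ((1 : Matrix (Fin 2 × Fin 2) (Fin 2 × Fin 2) ℝ)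
    + ((-1 : ℝ) ^ (x : ℕ)) • Y₄)

/-- The decoding effects e_i = (1/2)(I₄ + (−1)^i σ_y ⊗ σ_y). -/
noncomputable def edh (i : Fin 2) : Matrix (Fin 2 × Fin 2) (Fin 2 × Fin 2) ℝ :=
  (1 / 2 : ℝ) • ((1 : Matrix (Fin 2 × Fin 2) (Fin 2 × Fin 2) ℝ)
    + ((-1 : ℝ) ^ (i : ℕ)) • Y₄)

namespace Matrix

variable {R : Type*} [CommRing R]

theorem trace_mul_eq_zero_of_transpose_eq_neg_of_isSymm [IsAddTorsionFree R] {n : Type*}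
    [Fintype n] {A B : Matrix n n R} (hA : Aᵀ = -A) (hB : B.IsSymm) : (A * B).trace = 0 := by
  rw [← self_eq_neg]
  calc (A * B).trace = (A * B)ᵀ.trace := (trace_transpose _).symm
    _ = -(A * B).trace := by rw [transpose_mul, hA, hB.eq, mul_neg, trace_neg, trace_mul_comm]

theorem neg_kronecker_neg {l m p q : Type*} (A : Matrix l m R) (B : Matrix p q R) :
    (-A) ⊗ₖ (-B) = A ⊗ₖ B := by
  ext
  simp [kroneckerMap_apply]

end Matrix

section Involution

variable {n : Type*} [Fintype n] [DecidableEq n] {Y : Matrix n n ℝ}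

theorem one_add_smul_mul_one_add_smul (hYY : Y * Y = 1) (a b : ℝ) :
    (1 + a • Y) * (1 + b • Y) = (1 + a * b) • (1 : Matrix n n ℝ) + (a + b) • Y := by
  simp only [add_mul, mul_add, one_mul, mul_one, smul_mul_smul_comm, hYY]
  module

/-- For a symmetric involution `Y` and `s = ±1`, `1 + s • Y` is twice a projection. -/
theorem posSemidef_one_add_smul_of_mul_self_eq_one (hY : Y.IsSymm) (hYY : Y * Y = 1) {s : ℝ}
    (hs : s * s = 1) : (1 + s • Y).PosSemidef := by
  have hsq : (1 + s • Y)ᴴ * (1 + s • Y) = (2 : ℝ) • (1 + s • Y) := by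
    rw [conjTranspose_eq_transpose_of_trivial, (isSymm_one.add (hY.smul s)).eq,
      one_add_smul_mul_one_add_smul hYY, hs]
    module
  have h := (posSemidef_conjTranspose_mul_self (1 + s • Y)).smul (a := (1 / 2 : ℝ)) (by norm_num)
  rwa [hsq, smul_smul, one_div_mul_cancel two_ne_zero, one_smul] at h

theorem trace_one_add_smul (htr : Y.trace = 0) (s : ℝ) :
    (1 + s • Y).trace = Fintype.card n := by
  simp [htr]

theorem trace_one_add_smul_mul_one_add_smul (htr : Y.trace = 0) (hYY : Y * Y = 1) (a b : ℝ) :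
    ((1 + a • Y) * (1 + b • Y)).trace = Fintype.card n * (1 + a * b) := by
  simp [one_add_smul_mul_one_add_smul hYY, htr, mul_comm]

end Involution

theorem y_transpose : yᵀ = -y := by
  ext i j
  fin_cases i <;> fin_cases j <;> simp [y]

theorem y_mul_self : y * y = -1 := by
  ext i j
  fin_cases i <;> fin_cases j <;> simp [y]

theorem trace_y : y.trace = 0 := by
  simp [y, trace]

theorem Y₄_isSymm : Y₄.IsSymm := by
  rw [Y₄, IsSymm, transpose_neg, ← kroneckerMap_transpose, y_transpose, neg_kronecker_neg]

theorem Y₄_mul_self : Y₄ * Y₄ = 1 := by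
  rw [Y₄, neg_mul_neg, ← mul_kronecker_mul, y_mul_self, neg_kronecker_neg, one_kronecker_one]

theorem trace_Y₄ : Y₄.trace = 0 := by
  rw [Y₄, trace_neg, trace_kronecker, trace_y, zero_mul, neg_zero]

theorem trace_Y₄_mul_kronecker {E : Matrix (Fin 2) (Fin 2) ℝ} (hE : E.IsSymm)
    (F : Matrix (Fin 2) (Fin 2) ℝ) : (Y₄ * (E ⊗ₖ F)).trace = 0 := by
  rw [Y₄, neg_mul, trace_neg, ← mul_kronecker_mul, trace_kronecker,
    trace_mul_eq_zero_of_transpose_eq_neg_of_isSymm y_transpose hE, zero_mul, neg_zero]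

theorem neg_one_pow_mul_self (k : ℕ) : (-1 : ℝ) ^ k * (-1) ^ k = 1 := by
  simp [← mul_pow]

theorem isSymm_one_add_smul_Y₄ (s : ℝ) : (1 + s • Y₄).IsSymm :=
  isSymm_one.add (Y₄_isSymm.smul s)

theorem ωdh_isTwoRebitState (x : Fin 2) : IsTwoRebitState (ωdh x) := by
  refine ⟨(isSymm_one_add_smul_Y₄ _).smul _, ?_, ?_⟩
  · exact (posSemidef_one_add_smul_of_mul_self_eq_one Y₄_isSymm Y₄_mul_self
      (neg_one_pow_mul_self x)).smul (by norm_num)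
  · rw [ωdh, trace_smul, trace_one_add_smul trace_Y₄]
    norm_num

theorem edh_posSemidef (i : Fin 2) : (edh i).PosSemidef :=
  (posSemidef_one_add_smul_of_mul_self_eq_one Y₄_isSymm Y₄_mul_self
    (neg_one_pow_mul_self i)).smul (by norm_num)

theorem edh_zero_add_edh_one : edh 0 + edh 1 = 1 := by
  simp only [edh, Fin.val_zero, Fin.val_one, pow_zero, pow_one]
  module

theorem trace_edh_mul_ωdh (i x : Fin 2) :
    (edh i * ωdh x).trace = if i = x then 1 else 0 := by
  rw [edh, ωdh, smul_mul_smul_comm, trace_smul,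
    trace_one_add_smul_mul_one_add_smul trace_Y₄ Y₄_mul_self]
  fin_cases i <;> fin_cases x <;> norm_num

theorem trace_ωdh_mul_kronecker (x : Fin 2) {E : Matrix (Fin 2) (Fin 2) ℝ} (hE : E.IsSymm)
    (F : Matrix (Fin 2) (Fin 2) ℝ) :
    (ωdh x * (E ⊗ₖ F)).trace = E.trace * F.trace / 4 := by
  rw [ωdh, smul_mul_assoc, add_mul, smul_mul_assoc, trace_smul, trace_add, trace_smul,
    trace_Y₄_mul_kronecker hE F, one_mul, trace_kronecker]
  simp only [smul_eq_mul, mul_zero, add_zero]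
  ring

/-- **Example 2 of the paper: perfectly secure data hiding using rebits.**
(a) Each ω_x is a two-rebit state; (b) the e_i are symmetric positive
semidefinite and sum to the identity, hence a valid two-outcome measurement;
(c) the measurement perfectly distinguishes ω₀ from ω₁; and (d) no product
effect reveals any information about the encoded bit x. -/
theorem stmt15 :
    (∀ x : Fin 2, IsTwoRebitState (ωdh x)) ∧
    ((∀ i : Fin 2, (edh i).IsSymm ∧ (edh i).PosSemidef) ∧ edh 0 + edh 1 = 1) ∧
    (∀ i x : Fin 2, (edh i * ωdh x).trace = if i = x then 1 else 0) ∧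
    (∀ E F : Matrix (Fin 2) (Fin 2) ℝ, E.IsSymm → F.IsSymm →
      (ωdh 0 * (E ⊗ₖ F)).trace = (ωdh 1 * (E ⊗ₖ F)).trace) := by
  refine ⟨ωdh_isTwoRebitState, ⟨fun i ↦ ⟨(isSymm_one_add_smul_Y₄ _).smul _, edh_posSemidef i⟩,
    edh_zero_add_edh_one⟩, trace_edh_mul_ωdh, fun E F hE _ ↦ ?_⟩
  rw [trace_ωdh_mul_kronecker 0 hE F, trace_ωdh_mul_kronecker 1 hE F]
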